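/- Under the hypotheses of the previous statement, the sharper bound E(x^k) - E(x^{k+1}) ≥ max(1/λ - L/2 - α/(2‖x^{k+1}‖₂), 1/(2λ) - L/2)·‖x^{k+1} - x^k‖₂² holds for the FBS iteration when x^{k+1} ≠ 0. -/

import Mathlib

open Finset Filter Set
open scoped RealInnerProductSpace

noncomputable def norm1 {N : ℕ} (x : EuclideanSpace ℝ (Fin N)) : ℝ := ∑ i, |x i|

noncomputable def normInf {N : ℕ} (x : EuclideanSpace ℝ (Fin N)) : ℝ := ⨆ i, |x i|

noncomputable def Fobj {N : ℕ} (a lam : ℝ) (y x : EuclideanSpace ℝ (Fin N)) : ℝ :=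
  norm1 x - a * ‖x‖ + 1 / (2 * lam) * ‖x - y‖ ^ 2

/-!
Write `d = xᵏ⁺¹ - xᵏ`. Expanding the proximal objective and applying the descent lemma to `l`
gives `E(xᵏ) - E(xᵏ⁺¹) ≥ (Fobj(xᵏ) - Fobj(xᵏ⁺¹)) + (1/(2λ) - L/2)‖d‖²`. The bracket is `≥ 0`
because `xᵏ⁺¹` minimizes `Fobj`, and `≥ (1/(2λ) - α/(2‖xᵏ⁺¹‖))‖d‖²` because replacing `‖·‖₂` by
its tangent at `xᵏ⁺¹ ≠ 0` yields a `1/λ`-strongly convex function, still minimized at `xᵏ⁺¹`,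
which exceeds `Fobj` by at most `α‖x - xᵏ⁺¹‖²/(2‖xᵏ⁺¹‖)`.
-/

section InnerProductSpace

open Topology

variable {E : Type*} [NormedAddCommGroup E] [InnerProductSpace ℝ E]

theorem real_inner_div_norm_le_norm (v w : E) : ⟪v, w⟫ / ‖v‖ ≤ ‖w‖ := by
  rcases (norm_nonneg v).eq_or_lt with hv | hv
  · simp [← hv]
  · rw [div_le_iff₀ hv, mul_comm]
    exact real_inner_le_norm v w

-- after clearing denominators this is `2 ‖v‖ ‖w‖ ≤ ‖v‖² + ‖w‖²`
theorem norm_sub_real_inner_div_norm_le (v w : E) (hv : v ≠ 0) :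
    ‖w‖ - ⟪v, w⟫ / ‖v‖ ≤ ‖w - v‖ ^ 2 / (2 * ‖v‖) := by
  have hpos : 0 < ‖v‖ := norm_pos_iff.mpr hv
  rw [norm_sub_sq_real, sub_div' hpos.ne', div_le_div_iff₀ hpos (by positivity), real_inner_comm]
  nlinarith [sq_nonneg (‖v‖ - ‖w‖)]

theorem nonneg_of_forall_mem_Ioo_nonneg_add_mul {A B : ℝ}
    (h : ∀ t ∈ Ioo (0 : ℝ) 1, 0 ≤ A + t * B) : 0 ≤ A := by
  have hlim : Tendsto (fun t : ℝ => A + t * B) (𝓝[>] 0) (𝓝 A) :=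
    tendsto_nhdsWithin_of_tendsto_nhds
      ((by fun_prop : Continuous fun t : ℝ => A + t * B).tendsto' 0 A (by simp))
  exact ge_of_tendsto hlim (Filter.mem_of_superset (Ioo_mem_nhdsGT one_pos) h)

theorem ConvexOn.quadratic_growth_of_isMinOn_add_sq_norm_sub {c : E → ℝ}
    (hc : ConvexOn ℝ univ c) {lam : ℝ} (hlam : 0 < lam) {y xs : E}
    (hmin : IsMinOn (fun x => c x + 1 / (2 * lam) * ‖x - y‖ ^ 2) univ xs) (x : E) :
    1 / (2 * lam) * ‖x - xs‖ ^ 2 ≤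
      (c x + 1 / (2 * lam) * ‖x - y‖ ^ 2) - (c xs + 1 / (2 * lam) * ‖xs - y‖ ^ 2) := by
  have hsq : ∀ t : ℝ, ‖xs + t • (x - xs) - y‖ ^ 2 =
      ‖xs - y‖ ^ 2 + 2 * t * ⟪xs - y, x - xs⟫ + t ^ 2 * ‖x - xs‖ ^ 2 := by
    intro t
    rw [show xs + t • (x - xs) - y = (xs - y) + t • (x - xs) by abel, norm_add_sq_real,
      real_inner_smul_right, norm_smul, mul_pow, Real.norm_eq_abs, sq_abs]
    ring
  -- first-order optimality along the segment from `xs` to `x`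
  have hfirst : 0 ≤ c x - c xs + ⟪xs - y, x - xs⟫ / lam := by
    refine nonneg_of_forall_mem_Ioo_nonneg_add_mul (B := ‖x - xs‖ ^ 2 / (2 * lam)) fun t ht => ?_
    have hconv : c (xs + t • (x - xs)) ≤ (1 - t) * c xs + t * c x := by
      have := hc.2 (mem_univ xs) (mem_univ x) (sub_nonneg.mpr ht.2.le) ht.1.le (sub_add_cancel 1 t)
      rwa [show (1 - t) • xs + t • x = xs + t • (x - xs) by module, smul_eq_mul, smul_eq_mul]
        at this
    have hle := hmin (mem_univ (xs + t • (x - xs)))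
    simp only [mem_ofPred_eq, hsq] at hle
    refine (mul_nonneg_iff_of_pos_left ht.1).mp ?_
    have hlin : t * (c x - c xs + ⟪xs - y, x - xs⟫ / lam + t * (‖x - xs‖ ^ 2 / (2 * lam))) =
        (1 - t) * c xs + t * c x - c xs +
          1 / (2 * lam) * (2 * t * ⟪xs - y, x - xs⟫ + t ^ 2 * ‖x - xs‖ ^ 2) := by
      field_simp; ring
    rw [hlin]
    linarith
  have hx := hsq 1
  rw [one_smul, add_sub_cancel] at hx
  have hgap : c x + 1 / (2 * lam) * ‖x - y‖ ^ 2 - (c xs + 1 / (2 * lam) * ‖xs - y‖ ^ 2) -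
      1 / (2 * lam) * ‖x - xs‖ ^ 2 = c x - c xs + ⟪xs - y, x - xs⟫ / lam := by
    rw [hx]; field_simp; ring
  linarith

theorem le_add_inner_add_sq_of_lipschitz_gradient [CompleteSpace E] {L : ℝ} {l : E → ℝ}
    {g : E → E} (hg : ∀ z, HasGradientAt l (g z) z) (u d : E)
    (hLip : ∀ z, ‖g z - g u‖ ≤ L * ‖z - u‖) :
    l (u + d) ≤ l u + ⟪g u, d⟫ + L / 2 * ‖d‖ ^ 2 := by
  set ψ : ℝ → ℝ := fun t => l (u + t • d) - t * ⟪g u, d⟫ - L / 2 * t ^ 2 * ‖d‖ ^ 2 with hψ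
  have hψ' : ∀ t : ℝ,
      HasDerivAt ψ (⟪g (u + t • d), d⟫ - ⟪g u, d⟫ - L * t * ‖d‖ ^ 2) t := by
    intro t
    have hline : HasDerivAt (fun s : ℝ => u + s • d) d t := by
      simpa using ((hasDerivAt_id t).smul_const d).const_add u
    have hl : HasDerivAt (fun s : ℝ => l (u + s • d)) ⟪g (u + t • d), d⟫ t := by
      have h := (hg (u + t • d)).hasFDerivAt.comp_hasDerivAt t hline
      simp only [InnerProductSpace.toDual_apply_apply] at h
      exact h
    refine ((hl.sub ((hasDerivAt_id t).mul_const ⟪g u, d⟫)).sub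
      (((hasDerivAt_pow 2 t).const_mul (L / 2)).mul_const (‖d‖ ^ 2))).congr_deriv ?_
    rw [show (2 : ℕ) - 1 = 1 from rfl]
    push_cast
    ring
  have hderiv_nonpos : ∀ t ∈ interior (Icc (0 : ℝ) 1), deriv ψ t ≤ 0 := by
    intro t ht
    rw [interior_Icc] at ht
    have hgrad : ‖g (u + t • d) - g u‖ ≤ L * (t * ‖d‖) := by
      simpa [norm_smul, abs_of_pos ht.1] using hLip (u + t • d)
    have hinner := real_inner_le_norm (g (u + t • d) - g u) d
    rw [(hψ' t).deriv, ← inner_sub_left]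
    nlinarith [norm_nonneg d]
  have hanti : AntitoneOn ψ (Icc 0 1) :=
    antitoneOn_of_deriv_nonpos (convex_Icc 0 1)
      (fun t _ => (hψ' t).continuousAt.continuousWithinAt)
      (fun t _ => (hψ' t).differentiableAt.differentiableWithinAt) hderiv_nonpos
  have h01 := hanti (left_mem_Icc.mpr zero_le_one) (right_mem_Icc.mpr zero_le_one) zero_le_one
  simp only [hψ, one_smul, zero_smul, add_zero, one_mul, one_pow, zero_mul, sub_zero,
    mul_one, ne_eq, OfNat.ofNat_ne_zero, not_false_eq_true, zero_pow, mul_zero] at h01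
  linarith

end InnerProductSpace

section Euclidean

variable {N : ℕ}

theorem convexOn_norm1 : ConvexOn ℝ univ (norm1 : EuclideanSpace ℝ (Fin N) → ℝ) := by
  refine ⟨convex_univ, fun u _ v _ s t hs ht _ => ?_⟩
  simp only [norm1, smul_eq_mul, Finset.mul_sum, ← Finset.sum_add_distrib]
  refine Finset.sum_le_sum fun i _ => ?_
  calc |(s • u + t • v) i| = |s * u i + t * v i| := rfl
    _ ≤ |s * u i| + |t * v i| := abs_add_le _ _
    _ = s * |u i| + t * |v i| := by rw [abs_mul, abs_mul, abs_of_nonneg hs, abs_of_nonneg ht]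

theorem Fobj_sub_Fobj_ge_of_isMinOn {a lam : ℝ} (ha : 0 ≤ a) (hlam : 0 < lam)
    {y xs : EuclideanSpace ℝ (Fin N)} (hxs : xs ≠ 0) (hmin : IsMinOn (Fobj a lam y) univ xs)
    (x : EuclideanSpace ℝ (Fin N)) :
    (1 / (2 * lam) - a / (2 * ‖xs‖)) * ‖x - xs‖ ^ 2 ≤ Fobj a lam y x - Fobj a lam y xs := by
  have hn : 0 < ‖xs‖ := norm_pos_iff.mpr hxs
  set c : EuclideanSpace ℝ (Fin N) → ℝ := fun z => norm1 z + ⟪-(a / ‖xs‖) • xs, z⟫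
  set ρ : EuclideanSpace ℝ (Fin N) → ℝ := fun z => ‖z‖ - ⟪xs, z⟫ / ‖xs‖
  have hc : ConvexOn ℝ univ c := convexOn_norm1.add ((innerₛₗ ℝ _).convexOn convex_univ)
  have hF : ∀ z, Fobj a lam y z = c z + 1 / (2 * lam) * ‖z - y‖ ^ 2 - a * ρ z := by
    intro z
    simp only [Fobj, c, ρ, real_inner_smul_left]
    ring
  have hρ : ∀ z, 0 ≤ a * ρ z := fun z =>
    mul_nonneg ha (sub_nonneg.mpr (real_inner_div_norm_le_norm xs z))
  have hρxs : ρ xs = 0 := by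
    simp only [ρ, real_inner_self_eq_norm_sq]
    field_simp
    ring
  -- replacing `‖·‖` by its tangent at `xs` majorizes `Fobj a lam y` with equality at `xs`
  have hmin' : IsMinOn (fun z => c z + 1 / (2 * lam) * ‖z - y‖ ^ 2) univ xs := fun z _ => by
    have := hmin (mem_univ z)
    simp only [mem_ofPred_eq, hF, hρxs, mul_zero, sub_zero] at this ⊢
    linarith [hρ z]
  have hgrowth := hc.quadratic_growth_of_isMinOn_add_sq_norm_sub hlam hmin' x
  have hcurv : a * ρ x ≤ a * (‖x - xs‖ ^ 2 / (2 * ‖xs‖)) :=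
    mul_le_mul_of_nonneg_left (norm_sub_real_inner_div_norm_le xs x hxs) ha
  have hsplit : (1 / (2 * lam) - a / (2 * ‖xs‖)) * ‖x - xs‖ ^ 2 =
      1 / (2 * lam) * ‖x - xs‖ ^ 2 - a * (‖x - xs‖ ^ 2 / (2 * ‖xs‖)) := by ring
  rw [hF x, hF xs, hρxs, hsplit]
  linarith

theorem Fobj_forward_step_sub (a : ℝ) {lam : ℝ} (hlam : lam ≠ 0)
    (x x' v : EuclideanSpace ℝ (Fin N)) :
    Fobj a lam (x - lam • v) x - Fobj a lam (x - lam • v) x' =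
      (norm1 x - a * ‖x‖) - (norm1 x' - a * ‖x'‖) - 1 / (2 * lam) * ‖x' - x‖ ^ 2 -
        ⟪v, x' - x⟫ := by
  have hx : x - (x - lam • v) = lam • v := by abel
  have hx' : x' - (x - lam • v) = (x' - x) + lam • v := by abel
  simp only [Fobj, hx, hx', norm_add_sq_real, norm_smul, real_inner_smul_right, mul_pow,
    Real.norm_eq_abs, sq_abs, real_inner_comm v]
  field_simp
  ring

end Euclidean

theorem stmt9_general {N : ℕ} (a lam L : ℝ) (ha : 0 ≤ a)
    (hlam : 0 < lam)
    (l : EuclideanSpace ℝ (Fin N) → ℝ)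
    (g : EuclideanSpace ℝ (Fin N) → EuclideanSpace ℝ (Fin N))
    (hg : ∀ z, HasGradientAt l (g z) z)
    (hLip : ∀ z w, ‖g z - g w‖ ≤ L * ‖z - w‖)
    (xk xk1 : EuclideanSpace ℝ (Fin N)) (hxk1 : xk1 ≠ 0)
    (hstep : IsMinOn (Fobj a lam (xk - lam • g xk)) Set.univ xk1) :
    (norm1 xk - a * ‖xk‖ + l xk) - (norm1 xk1 - a * ‖xk1‖ + l xk1) ≥
      max (1 / lam - L / 2 - a / (2 * ‖xk1‖)) (1 / (2 * lam) - L / 2) *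
        ‖xk1 - xk‖ ^ 2 := by
  have hstep_sub := Fobj_forward_step_sub a hlam.ne' xk xk1 (g xk)
  have hdecrease : Fobj a lam (xk - lam • g xk) xk1 ≤ Fobj a lam (xk - lam • g xk) xk :=
    hstep (mem_univ xk)
  have hgap := Fobj_sub_Fobj_ge_of_isMinOn ha hlam hxk1 hstep xk
  have hdescent := le_add_inner_add_sq_of_lipschitz_gradient hg xk (xk1 - xk) (hLip · xk)
  rw [add_sub_cancel] at hdescent
  rw [norm_sub_rev] at hgap
  have hsplit : (1 / lam - L / 2 - a / (2 * ‖xk1‖)) * ‖xk1 - xk‖ ^ 2 =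
      (1 / (2 * lam) - a / (2 * ‖xk1‖)) * ‖xk1 - xk‖ ^ 2 + 1 / (2 * lam) * ‖xk1 - xk‖ ^ 2 -
        L / 2 * ‖xk1 - xk‖ ^ 2 := by
    field_simp; ring
  rw [ge_iff_le, max_mul_of_nonneg _ _ (sq_nonneg _), hsplit, sub_mul]
  exact max_le (by linarith) (by linarith)

theorem stmt9 {N : ℕ} (a lam L : ℝ) (ha : 0 ≤ a) (hL : 0 < L)
    (hlam : 0 < lam) (hlamL : lam < 1 / L)
    (l : EuclideanSpace ℝ (Fin N) → ℝ)
    (g : EuclideanSpace ℝ (Fin N) → EuclideanSpace ℝ (Fin N))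
    (hg : ∀ z, HasGradientAt l (g z) z)
    (hLip : ∀ z w, ‖g z - g w‖ ≤ L * ‖z - w‖)
    (xk xk1 : EuclideanSpace ℝ (Fin N)) (hxk1 : xk1 ≠ 0)
    (hstep : IsMinOn (Fobj a lam (xk - lam • g xk)) Set.univ xk1) :
    (norm1 xk - a * ‖xk‖ + l xk) - (norm1 xk1 - a * ‖xk1‖ + l xk1) ≥
      max (1 / lam - L / 2 - a / (2 * ‖xk1‖)) (1 / (2 * lam) - L / 2) *
        ‖xk1 - xk‖ ^ 2 :=
  stmt9_general a lam L ha hlam l g hg hLip xk xk1 hxk1 hstep
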